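/- Fix a matrix C ∈ ℝ^{ℓ×d} with |X_i Cᵀ C X_jᵀ| ≤ 2 for all i, j ∈ [n], fix v ∈ {−1,+1}^m, y ∈ ℝ^n, η > 0, and weights B(t) ∈ ℝ^{m×ℓ}. For i ∈ [n], let S_i^⊥ ⊆ [m] be any set of neurons and define I₂^i := (1/√m) Σ_{r ∈ S_i^⊥} v_r·[ σ((B_r(t) − η·∂Φ(B(t))/∂B_r(t))·(C X_iᵀ)) − σ(B_r(t)·(C X_iᵀ)) ]. Then |I₂^i| ≤ C₀·η·√n·|S_i^⊥|·‖y − u(t)‖ / m for an absolute constant C₀ > 0. -/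

import Mathlib

/-! The ReLU is 1-Lipschitz, so a gradient step moves neuron `r`'s contribution at `X_i` by at
most `η |⟨∂Φ/∂B_r, C X_iᵀ⟩|`. Expanding the gradient, this inner product is a combination of the
residuals `y_j - u_j` with coefficients `v_r 1{…} X_j Cᵀ C X_iᵀ`, each of size at most 2, so it is
at most `(2/√m) ‖y - u‖₁ ≤ (2/√m) √n ‖y - u‖`. Summing over `S_i` gives the bound with `C₀ = 2`. -/

open MeasureTheory ProbabilityTheory Real
open scoped NNReal

noncomputable section

/-- Real-valued indicator of a proposition. -/
def ind (P : Prop) : ℝ := @ite _ P (Classical.dec P) 1 0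

/-- Dot product of two real vectors. -/
def dot {p : ℕ} (x y : Fin p → ℝ) : ℝ := ∑ i, x i * y i

/-- Matrix-vector product. -/
def mvec {a b : ℕ} (M : Fin a → Fin b → ℝ) (x : Fin b → ℝ) : Fin a → ℝ := fun i => dot (M i) x

/-- Vector-matrix product. -/
def vmul {a b : ℕ} (x : Fin a → ℝ) (M : Fin a → Fin b → ℝ) : Fin b → ℝ :=
  fun j => ∑ i, x i * M i j

/-- Euclidean norm of a real vector. -/
def eunorm {p : ℕ} (x : Fin p → ℝ) : ℝ := Real.sqrt (∑ i, x i ^ 2)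

/-- ℓ²→ℓ² operator (spectral) norm of a matrix. -/
def specNorm {a b : ℕ} (M : Fin a → Fin b → ℝ) : ℝ :=
  sSup {c : ℝ | ∃ x : Fin b → ℝ, ∑ j, x j ^ 2 ≤ 1 ∧ c = eunorm (mvec M x)}

/-- Smallest eigenvalue of a (symmetric) matrix, as the infimum of the quadratic form
over the unit sphere. -/
def lamMin {n : ℕ} (M : Fin n → Fin n → ℝ) : ℝ :=
  sInf {c : ℝ | ∃ x : Fin n → ℝ, ∑ i, x i ^ 2 = 1 ∧ c = dot x (mvec M x)}

/-- Standard Gaussian measure on ℝ^b. -/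
def stdGaussian (b : ℕ) : Measure (Fin b → ℝ) := Measure.pi fun _ => gaussianReal 0 1

/-- Measure on a×b real matrices with i.i.d. centered Gaussian entries of variance `v`. -/
def gaussMatrix (a b : ℕ) (v : ℝ≥0) : Measure (Fin a → Fin b → ℝ) :=
  Measure.pi fun _ => Measure.pi fun _ => gaussianReal 0 v

/-- Uniform measure on {-1, 1} ⊆ ℝ. -/
def signMeasure : Measure ℝ :=
  (PMF.uniformOfFinset ({-1, 1} : Finset ℝ) ⟨-1, by simp⟩).toMeasure

instance : IsProbabilityMeasure signMeasure := by
  unfold signMeasure; infer_instance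

/-- Uniform measure on {-1,1}^m. -/
def signVec (m : ℕ) : Measure (Fin m → ℝ) := Measure.pi fun _ => signMeasure

instance (b : ℕ) : IsProbabilityMeasure (stdGaussian b) := by
  unfold _root_.stdGaussian; infer_instance

instance (a b : ℕ) (v : ℝ≥0) : IsProbabilityMeasure (gaussMatrix a b v) := by
  unfold gaussMatrix; infer_instance

instance (m : ℕ) : IsProbabilityMeasure (signVec m) := by
  unfold signVec; infer_instance

/-- Output of the plain two-layer ReLU network. -/
def netPlain {n d m : ℕ} (X : Fin n → Fin d → ℝ) (v : Fin m → ℝ)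
    (W : Fin m → Fin d → ℝ) (i : Fin n) : ℝ :=
  (Real.sqrt m)⁻¹ * ∑ r, v r * max 0 (dot (W r) (X i))

/-- Gradient of Φ(W) = ½‖y-u‖² w.r.t. the r-th row of W (plain network). -/
def gradPlain {n d m : ℕ} (X : Fin n → Fin d → ℝ) (v : Fin m → ℝ) (y : Fin n → ℝ)
    (W : Fin m → Fin d → ℝ) (r : Fin m) : Fin d → ℝ :=
  fun q => -(Real.sqrt m)⁻¹ *
    ∑ j, (y j - netPlain X v W j) * v r * ind (0 ≤ dot (W r) (X j)) * X j q

/-- NTK matrix of the plain network. -/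
def HinfPlain {n d : ℕ} (X : Fin n → Fin d → ℝ) (i j : Fin n) : ℝ :=
  ∫ w, dot (X i) (X j) * ind (0 ≤ dot w (X i)) * ind (0 ≤ dot w (X j)) ∂ stdGaussian d

/-- `X_i Cᵀ C X_jᵀ`. -/
def dotC {n d ℓ : ℕ} (X : Fin n → Fin d → ℝ) (C : Fin ℓ → Fin d → ℝ) (i j : Fin n) : ℝ :=
  dot (mvec C (X i)) (mvec C (X j))

/-- Output of the input-dimension-reduced two-layer ReLU network. -/
def netFac {n d ℓ m : ℕ} (X : Fin n → Fin d → ℝ) (C : Fin ℓ → Fin d → ℝ)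
    (v : Fin m → ℝ) (B : Fin m → Fin ℓ → ℝ) (i : Fin n) : ℝ :=
  (Real.sqrt m)⁻¹ * ∑ r, v r * max 0 (dot (B r) (mvec C (X i)))

/-- Gradient of Φ(B) = ½‖y-u‖² w.r.t. the r-th row of B (input-dimension-reduced network). -/
def gradFac {n d ℓ m : ℕ} (X : Fin n → Fin d → ℝ) (C : Fin ℓ → Fin d → ℝ)
    (v : Fin m → ℝ) (y : Fin n → ℝ) (B : Fin m → Fin ℓ → ℝ) (r : Fin m) : Fin ℓ → ℝ :=
  fun q => -(Real.sqrt m)⁻¹ *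
    ∑ j, (y j - netFac X C v B j) * v r * ind (0 ≤ dot (B r) (mvec C (X j))) * mvec C (X j) q

/-- NTK matrix of the input-dimension-reduced network. -/
def HinfFac {n d ℓ : ℕ} (X : Fin n → Fin d → ℝ) (C : Fin ℓ → Fin d → ℝ) (i j : Fin n) : ℝ :=
  ∫ b, dotC X C i j * ind (0 ≤ dot b (mvec C (X i))) * ind (0 ≤ dot b (mvec C (X j)))
    ∂ stdGaussian ℓ

/-- Empirical NTK matrix of the input-dimension-reduced network at weights B. -/
def HFac {n d ℓ m : ℕ} (X : Fin n → Fin d → ℝ) (C : Fin ℓ → Fin d → ℝ)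
    (B : Fin m → Fin ℓ → ℝ) (i j : Fin n) : ℝ :=
  (m : ℝ)⁻¹ * ∑ r, dotC X C i j * ind (0 ≤ dot (B r) (mvec C (X i))) *
    ind (0 ≤ dot (B r) (mvec C (X j)))

/-- Output of the width-reduced two-layer ReLU network (W = A·B·C). -/
def netWidth {n d ℓ k m : ℕ} (X : Fin n → Fin d → ℝ) (C : Fin ℓ → Fin d → ℝ)
    (A : Fin m → Fin k → ℝ) (v : Fin m → ℝ) (B : Fin k → Fin ℓ → ℝ) (i : Fin n) : ℝ :=
  (Real.sqrt m)⁻¹ * ∑ r, v r * max 0 (dot (A r) (mvec B (mvec C (X i))))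

/-- The sign-indicator vector Z_i(B) of the width-reduced network. -/
def Zvec {n d ℓ k m : ℕ} (X : Fin n → Fin d → ℝ) (C : Fin ℓ → Fin d → ℝ)
    (A : Fin m → Fin k → ℝ) (v : Fin m → ℝ) (B : Fin k → Fin ℓ → ℝ) (i : Fin n) :
    Fin m → ℝ :=
  fun r => v r * ind (0 ≤ dot (A r) (mvec B (mvec C (X i))))

/-- Gradient of Φ(B) = ½‖y-u‖² w.r.t. B (width-reduced network). -/
def gradWidth {n d ℓ k m : ℕ} (X : Fin n → Fin d → ℝ) (C : Fin ℓ → Fin d → ℝ)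
    (A : Fin m → Fin k → ℝ) (v : Fin m → ℝ) (y : Fin n → ℝ)
    (B : Fin k → Fin ℓ → ℝ) : Fin k → Fin ℓ → ℝ :=
  fun a b => -(Real.sqrt m)⁻¹ *
    ∑ j, (y j - netWidth X C A v B j) * vmul (Zvec X C A v B j) A a * mvec C (X j) b

/-- Empirical NTK matrix of the width-reduced network at weights B. -/
def HWidth {n d ℓ k m : ℕ} (X : Fin n → Fin d → ℝ) (C : Fin ℓ → Fin d → ℝ)
    (A : Fin m → Fin k → ℝ) (v : Fin m → ℝ) (B : Fin k → Fin ℓ → ℝ) (i j : Fin n) : ℝ :=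
  (m : ℝ)⁻¹ * dotC X C i j * dot (vmul (Zvec X C A v B i) A) (vmul (Zvec X C A v B j) A)

/-- NTK matrix of the width-reduced network. -/
def HinfWidth {n d ℓ k m : ℕ} (X : Fin n → Fin d → ℝ) (C : Fin ℓ → Fin d → ℝ)
    (A : Fin m → Fin k → ℝ) (v : Fin m → ℝ) (i j : Fin n) : ℝ :=
  ∫ B, HWidth X C A v B i j ∂ gaussMatrix k ℓ 1

theorem dot_sub_mul {p : ℕ} (x g w : Fin p → ℝ) (η : ℝ) :
    dot (fun q => x q - η * g q) w = dot x w - η * dot g w := by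
  simp only [dot, sub_mul, Finset.sum_sub_distrib, Finset.mul_sum, mul_assoc]

theorem abs_relu_dot_sub_mul_sub_le {p : ℕ} (x g w : Fin p → ℝ) (η : ℝ) :
    |max 0 (dot (fun q => x q - η * g q) w) - max 0 (dot x w)| ≤ |η| * |dot g w| := by
  rw [max_comm 0, max_comm 0 (dot x w), dot_sub_mul, ← abs_mul]
  simpa using abs_max_sub_max_le_abs (dot x w - η * dot g w) (dot x w) 0

theorem sum_abs_le_sqrt_card_mul_eunorm {n : ℕ} (z : Fin n → ℝ) :
    ∑ j, |z j| ≤ √n * eunorm z := by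
  rw [eunorm, ← Real.sqrt_mul (Nat.cast_nonneg n)]
  refine Real.le_sqrt_of_sq_le ?_
  simpa [sq_abs] using sq_sum_le_card_mul_sum_sq (s := Finset.univ) (f := fun j => |z j|)

theorem abs_ind_le_one (P : Prop) : |ind P| ≤ 1 := by
  unfold ind; split <;> norm_num

theorem abs_sum_mul_le_card_mul {ι : Type*} (s : Finset ι) {v f : ι → ℝ} {M : ℝ}
    (hv : ∀ r ∈ s, |v r| ≤ 1) (hf : ∀ r ∈ s, |f r| ≤ M) :
    |∑ r ∈ s, v r * f r| ≤ s.card * M := by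
  refine (Finset.abs_sum_le_sum_abs _ _).trans ?_
  rw [← nsmul_eq_mul]
  refine Finset.sum_le_card_nsmul _ _ _ fun r hr => ?_
  simpa [abs_mul] using mul_le_mul (hv r hr) (hf r hr) (abs_nonneg _) zero_le_one

section gradFac

variable {n d ℓ m : ℕ} (X : Fin n → Fin d → ℝ) (C : Fin ℓ → Fin d → ℝ) (v : Fin m → ℝ)
  (y : Fin n → ℝ) (B : Fin m → Fin ℓ → ℝ) (r : Fin m) (i : Fin n)

theorem dot_gradFac_mvec :
    dot (gradFac X C v y B r) (mvec C (X i)) =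
      -(√m)⁻¹ * ∑ j, (y j - netFac X C v B j) * v r *
        ind (0 ≤ dot (B r) (mvec C (X j))) * dotC X C j i := by
  simp only [dot, gradFac, dotC, Finset.mul_sum, Finset.sum_mul]
  rw [Finset.sum_comm]
  refine Finset.sum_congr rfl fun j _ => Finset.sum_congr rfl fun q _ => ?_
  ring

theorem abs_dot_gradFac_mvec_le {K : ℝ} (hv : |v r| ≤ 1) (hC : ∀ j, |dotC X C j i| ≤ K) :
    |dot (gradFac X C v y B r) (mvec C (X i))| ≤
      (√m)⁻¹ * (K * ∑ j, |y j - netFac X C v B j|) := by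
  rw [dot_gradFac_mvec, abs_mul, abs_neg, abs_inv, abs_of_nonneg (Real.sqrt_nonneg _),
    Finset.mul_sum]
  gcongr
  refine (Finset.abs_sum_le_sum_abs _ _).trans (Finset.sum_le_sum fun j _ => ?_)
  simp only [abs_mul]
  calc _ ≤ |y j - netFac X C v B j| * 1 * 1 * K := by
        gcongr
        exacts [abs_ind_le_one _, hC j]
    _ = _ := by ring

end gradFac

theorem stmt8 :
    ∃ C₀ : ℝ, 0 < C₀ ∧
    ∀ (n d ℓ m : ℕ), 0 < m →
    ∀ X : Fin n → Fin d → ℝ, (∀ i, ∑ j, X i j ^ 2 = 1) →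
    ∀ C : Fin ℓ → Fin d → ℝ, (∀ i j, |dotC X C i j| ≤ 2) →
    ∀ v : Fin m → ℝ, (∀ r, v r = 1 ∨ v r = -1) →
    ∀ y : Fin n → ℝ, ∀ η : ℝ, 0 < η →
    ∀ B : Fin m → Fin ℓ → ℝ, ∀ S : Fin n → Finset (Fin m), ∀ i : Fin n,
    |(Real.sqrt m)⁻¹ * ∑ r ∈ S i, v r *
        (max 0 (dot (fun q => B r q - η * gradFac X C v y B r q) (mvec C (X i))) -
          max 0 (dot (B r) (mvec C (X i))))| ≤
      C₀ * η * Real.sqrt n * (S i).card *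
        eunorm (fun j => y j - netFac X C v B j) / m := by
  refine ⟨2, two_pos, fun n d ℓ m hm X _ C hC v hv y η hη B S i => ?_⟩
  set z := fun j => y j - netFac X C v B j
  have hv1 : ∀ r, |v r| ≤ 1 := fun r => by rcases hv r with h | h <;> simp [h]
  have hstep : ∀ r, |max 0 (dot (fun q => B r q - η * gradFac X C v y B r q) (mvec C (X i))) -
      max 0 (dot (B r) (mvec C (X i)))| ≤ η * ((√m)⁻¹ * (2 * (√n * eunorm z))) := fun r =>
    calc _ ≤ |η| * |dot (gradFac X C v y B r) (mvec C (X i))| := abs_relu_dot_sub_mul_sub_le ..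
      _ ≤ η * ((√m)⁻¹ * (2 * ∑ j, |z j|)) := by
        rw [abs_of_pos hη]
        gcongr
        exact abs_dot_gradFac_mvec_le X C v y B r i (hv1 r) (hC · i)
      _ ≤ _ := by gcongr; exact sum_abs_le_sqrt_card_mul_eunorm z
  have hsum := abs_sum_mul_le_card_mul (S i) (fun r _ => hv1 r) (fun r _ => hstep r)
  have hm' : (0 : ℝ) < m := Nat.cast_pos.mpr hm
  rw [abs_mul, abs_of_nonneg (by positivity)]
  calc _ ≤ (√m)⁻¹ * ((S i).card * (η * ((√m)⁻¹ * (2 * (√n * eunorm z))))) := by gcongr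
    _ = ((√m)⁻¹ * (√m)⁻¹) * (2 * η * √n * (S i).card * eunorm z) := by ring
    _ = _ := by rw [← mul_inv, Real.mul_self_sqrt hm'.le, div_eq_inv_mul, mul_comm]

end
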